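/- arXiv:math/0603420 — 3 statements merged into one kernel-verified Lean document; each statement's English description precedes it below -/
import Mathlib

section
/- Let A be a nontrivial continuous inverse algebra over ℂ. Then for every a ∈ A the spectrum σ(a) = {λ ∈ ℂ | λ·1 - a is not invertible in A} is a nonempty compact subset of ℂ. -/
open Filter Metric Bornology Set Topology

/-- Auxiliary: if a set is "rationally convex" (with respect to a module structure for
which scalar multiplication is continuous), then its closure is convex. -/
private lemma aux_convex_closure_of_rat
    {E : Type*} [AddCommGroup E] [Module ℝ E] [TopologicalSpace E]
    [IsTopologicalAddGroup E] [ContinuousSMul ℝ E] {s : Set E}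
    (h : ∀ q : ℚ, 0 ≤ q → q ≤ 1 → ∀ x ∈ s, ∀ y ∈ s,
      ((q : ℝ)) • x + ((1 : ℝ) - (q : ℝ)) • y ∈ s) :
    Convex ℝ (closure s) := by
  have key : ∀ t : ℝ, 0 ≤ t → t ≤ 1 → ∀ x ∈ s, ∀ y ∈ s,
      t • x + (1 - t) • y ∈ closure s := by
    intro t ht0 ht1 x hx y hy
    have hseq : ∀ n : ℕ, ∃ q : ℚ, 0 ≤ q ∧ q ≤ 1 ∧ t ≤ (q : ℝ) ∧ (q : ℝ) < t + 1 / (n + 1) := by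
      intro n
      have hlt : t < t + 1 / (n + 1 : ℝ) := by
        have : (0 : ℝ) < 1 / (n + 1 : ℝ) := by positivity
        linarith
      obtain ⟨q, hq1, hq2⟩ := exists_rat_btwn hlt
      have hq0 : (0 : ℚ) ≤ q := by
        have : (0 : ℝ) < (q : ℝ) := lt_of_le_of_lt ht0 hq1
        exact_mod_cast this.le
      refine ⟨min 1 q, le_min zero_le_one hq0, min_le_left _ _, ?_, ?_⟩
      · rcases le_total q 1 with h1 | h1
        · rw [min_eq_right h1]
          exact hq1.le
        · rw [min_eq_left h1]
          exact_mod_cast ht1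
      · calc ((min 1 q : ℚ) : ℝ) ≤ (q : ℝ) := by exact_mod_cast min_le_right 1 q
          _ < t + 1 / (n + 1) := hq2
    choose q hq0 hq1 hq2 hq3 using hseq
    have hqt : Tendsto (fun n : ℕ => ((q n : ℚ) : ℝ)) atTop (𝓝 t) := by
      refine tendsto_of_tendsto_of_tendsto_of_le_of_le tendsto_const_nhds ?_ hq2
        (fun n => (hq3 n).le)
      have h0 : Tendsto (fun n : ℕ => t + 1 / (n + 1 : ℝ)) atTop (𝓝 (t + 0)) :=
        tendsto_const_nhds.add tendsto_one_div_add_atTop_nhds_zero_nat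
      simpa using h0
    have hcont : Tendsto (fun n : ℕ => ((q n : ℚ) : ℝ) • x + (1 - ((q n : ℚ) : ℝ)) • y)
        atTop (𝓝 (t • x + (1 - t) • y)) :=
      (hqt.smul_const x).add ((tendsto_const_nhds.sub hqt).smul_const y)
    exact mem_closure_of_tendsto hcont
      (Filter.Eventually.of_forall fun n => h (q n) (hq0 n) (hq1 n) x hx y hy)
  intro x hx y hy a b ha hb hab
  have hb' : b = 1 - a := by linarith
  subst hb'
  have hcont : Continuous (Function.uncurry fun (u : E) (v : E) => a • u + (1 - a) • v) := by
    fun_prop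
  have hmm := map_mem_closure₂ (f := fun (u : E) (v : E) => a • u + (1 - a) • v) hcont hx hy
    (fun u hu v hv => key a ha (by linarith) u hu v hv)
  rwa [closure_closure] at hmm

set_option maxHeartbeats 1600000 in
/-- Let `A` be a nontrivial continuous inverse algebra over `ℂ`:
a Hausdorff locally convex topological `ℂ`-algebra whose unit group is open and on
which inversion is continuous.  Then for every `a ∈ A` the spectrum
`σ(a) = {λ : ℂ | ¬ IsUnit (λ•1 - a)}` is a nonempty compact subset of `ℂ`. -/
theorem spectrum_nonempty_and_compact_of_CIA
    (A : Type*) [Ring A] [Algebra ℂ A] [Nontrivial A]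
    [TopologicalSpace A] [IsTopologicalRing A] [ContinuousSMul ℂ A] [T2Space A]
    [Module ℝ A] [IsScalarTower ℝ ℂ A] [LocallyConvexSpace ℝ A]
    (hU : IsOpen {a : A | IsUnit a})
    (hinv : ContinuousOn (Ring.inverse : A → A) {a : A | IsUnit a})
    (a : A) :
    (spectrum ℂ a).Nonempty ∧ IsCompact (spectrum ℂ a) := by
  -- name the "abstract" real module structure instances
  rename_i wmod wtower wlcs
  -- the canonical real module structure coming from the complex one
  letI stdM : Module ℝ A := Module.complexToReal A
  -- real scalar multiplication is continuous for the canonical structure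
  haveI hCS : ContinuousSMul ℝ A := by
    constructor
    have h : Continuous fun p : ℝ × A => ((p.1 : ℂ)) • p.2 :=
      (Complex.continuous_ofReal.comp continuous_fst).smul continuous_snd
    exact h
  -- transport local convexity from the abstract structure to the canonical one
  haveI hLCS : LocallyConvexSpace ℝ A := by
    apply (locallyConvexSpace_iff_exists_convex_subset_zero ℝ A).mpr
    intro U hU0
    obtain ⟨V, hV0, hVc, hVU⟩ := exists_mem_nhds_isClosed_subset hU0
    obtain ⟨S, hS0, hSc, hSV⟩ :=
      (@locallyConvexSpace_iff_exists_convex_subset_zero ℝ A _ _ _ wmod _ _).mp wlcs V hV0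
    refine ⟨closure S, mem_of_superset hS0 subset_closure, ?_,
      (closure_minimal hSV hVc).trans hVU⟩
    apply aux_convex_closure_of_rat
    intro p hp0 hp1 x hx y hy
    have e1 := @ratCast_smul_eq A ℝ ℝ _ _ _ wmod stdM p x
    have e2 := @ratCast_smul_eq A ℝ ℝ _ _ _ wmod stdM (1 - p) y
    rw [show (1 : ℝ) - (p : ℝ) = ((1 - p : ℚ) : ℝ) by push_cast; ring]
    rw [← e1, ← e2]
    exact hSc hx hy (by exact_mod_cast hp0)
      (by
        have : (0 : ℚ) ≤ 1 - p := by linarith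
        exact_mod_cast this)
      (by push_cast; ring)
  -- the map λ ↦ λ•1 - a
  set u : ℂ → A := fun z => algebraMap ℂ A z - a with hu_def
  have hu_cont : Continuous u := by
    have : Continuous fun z : ℂ => algebraMap ℂ A z := by
      simp only [Algebra.algebraMap_eq_smul_one]
      exact continuous_id.smul continuous_const
    exact this.sub continuous_const
  -- the spectrum is closed
  have hσ_eq : spectrum ℂ a = u ⁻¹' {b : A | IsUnit b}ᶜ := by
    ext z
    simp [spectrum.mem_iff, hu_def]
  have hσ_closed : IsClosed (spectrum ℂ a) := by
    rw [hσ_eq]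
    exact hU.isClosed_compl.preimage hu_cont
  -- the auxiliary map g λ = 1 - λ⁻¹ • a tends to 1 along the cocompact filter
  set g : ℂ → A := fun z => (1 : A) - z⁻¹ • a with hg_def
  have hg_tendsto : Tendsto g (cocompact ℂ) (𝓝 1) := by
    have h1 : Tendsto (fun z : ℂ => z⁻¹) (cocompact ℂ) (𝓝 0) := by
      rw [← Metric.cobounded_eq_cocompact]
      exact tendsto_inv₀_cobounded
    have h2 : Tendsto (fun z : ℂ => z⁻¹ • a) (cocompact ℂ) (𝓝 ((0 : ℂ) • a)) :=
      h1.smul_const a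
    rw [zero_smul] at h2
    have h3 := Filter.Tendsto.sub
      (tendsto_const_nhds : Tendsto (fun _ : ℂ => (1 : A)) (cocompact ℂ) (𝓝 1)) h2
    simpa using h3
  -- eventually along cocompact, u z is a unit
  have hev : ∀ᶠ z : ℂ in cocompact ℂ, IsUnit (u z) := by
    have hg_unit : ∀ᶠ z : ℂ in cocompact ℂ, IsUnit (g z) :=
      hg_tendsto.eventually (hU.mem_nhds (isUnit_one (M := A)))
    have hz_ne : ∀ᶠ z : ℂ in cocompact ℂ, z ≠ 0 := by
      have : ({(0 : ℂ)} : Set ℂ)ᶜ ∈ cocompact ℂ := isCompact_singleton.compl_mem_cocompact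
      filter_upwards [this] with z hz
      simpa using hz
    filter_upwards [hg_unit, hz_ne] with z hzu hz0
    have hfact : u z = algebraMap ℂ A z * g z := by
      simp only [hu_def, hg_def, mul_sub, mul_one]
      congr 1
      rw [mul_smul_comm, ← Algebra.smul_def, smul_smul, inv_mul_cancel₀ hz0, one_smul]
    rw [hfact]
    exact ((isUnit_iff_ne_zero.2 hz0).map (algebraMap ℂ A)).mul hzu
  -- the spectrum is contained in a compact set
  obtain ⟨K, hK, hKsub⟩ := mem_cocompact.mp hev
  have hσ_sub : spectrum ℂ a ⊆ K := by
    intro z hz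
    by_contra hzK
    exact (spectrum.mem_iff.mp hz) (hKsub hzK)
  have hσ_compact : IsCompact (spectrum ℂ a) := hK.of_isClosed_subset hσ_closed hσ_sub
  refine ⟨?_, hσ_compact⟩
  -- Nonemptiness: argue by contradiction using Liouville's theorem
  by_contra hne
  rw [Set.not_nonempty_iff_eq_empty] at hne
  have hall : ∀ z : ℂ, IsUnit (u z) := by
    intro z
    by_contra h
    have : z ∈ spectrum ℂ a := spectrum.mem_iff.mpr h
    rw [hne] at this
    exact this
  -- the resolvent
  set R : ℂ → A := fun z => Ring.inverse (u z) with hR_def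
  have hR_cont : Continuous R := hinv.comp_continuous hu_cont hall
  have hRu : ∀ z, R z * u z = 1 := fun z => Ring.inverse_mul_cancel _ (hall z)
  have huR : ∀ z, u z * R z = 1 := fun z => Ring.mul_inverse_cancel _ (hall z)
  -- the resolvent tends to 0 at infinity
  have hR_tendsto : Tendsto R (cocompact ℂ) (𝓝 0) := by
    have hinv_at_one : ContinuousAt (Ring.inverse : A → A) 1 :=
      hinv.continuousAt (hU.mem_nhds (isUnit_one (M := A)))
    have h1 : Tendsto (fun z : ℂ => z⁻¹) (cocompact ℂ) (𝓝 0) := by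
      rw [← Metric.cobounded_eq_cocompact]
      exact tendsto_inv₀_cobounded
    have h2 : Tendsto (fun z : ℂ => Ring.inverse (g z)) (cocompact ℂ)
        (𝓝 (Ring.inverse (1 : A))) := hinv_at_one.tendsto.comp hg_tendsto
    have h3 : Tendsto (fun z : ℂ => z⁻¹ • Ring.inverse (g z)) (cocompact ℂ)
        (𝓝 ((0 : ℂ) • Ring.inverse (1 : A))) := h1.smul h2
    rw [zero_smul] at h3
    refine h3.congr' ?_
    have hg_unit : ∀ᶠ z : ℂ in cocompact ℂ, IsUnit (g z) :=
      hg_tendsto.eventually (hU.mem_nhds (isUnit_one (M := A)))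
    have hz_ne : ∀ᶠ z : ℂ in cocompact ℂ, z ≠ 0 := by
      have : ({(0 : ℂ)} : Set ℂ)ᶜ ∈ cocompact ℂ := isCompact_singleton.compl_mem_cocompact
      filter_upwards [this] with z hz
      simpa using hz
    filter_upwards [hg_unit, hz_ne] with z hzu hz0
    have hfact : u z = algebraMap ℂ A z * g z := by
      simp only [hu_def, hg_def, mul_sub, mul_one]
      congr 1
      rw [mul_smul_comm, ← Algebra.smul_def, smul_smul, inv_mul_cancel₀ hz0, one_smul]
    have hmul : u z * (z⁻¹ • Ring.inverse (g z)) = 1 := by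
      rw [hfact, Algebra.smul_def, mul_assoc, ← mul_assoc (g z),
        ← Algebra.commutes, ← mul_assoc, ← mul_assoc, ← map_mul,
        mul_inv_cancel₀ hz0, map_one, one_mul, Ring.mul_inverse_cancel _ hzu]
    calc z⁻¹ • Ring.inverse (g z)
        = (R z * u z) * (z⁻¹ • Ring.inverse (g z)) := by rw [hRu z, one_mul]
      _ = R z * (u z * (z⁻¹ • Ring.inverse (g z))) := by rw [mul_assoc]
      _ = R z := by rw [hmul, mul_one]
  -- R 0 ≠ 0
  have hR0_ne : R 0 ≠ 0 := by
    intro h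
    have : (1 : A) = 0 := by
      have := huR 0
      rw [h, mul_zero] at this
      exact this.symm
    exact one_ne_zero this
  -- get a continuous ℝ-linear functional separating R 0 from 0
  obtain ⟨f, hf⟩ : ∃ f : A →L[ℝ] ℝ, f (R 0) ≠ 0 := SeparatingDual.exists_ne_zero hR0_ne
  -- f is homogeneous for real scalars acting through ℂ
  have hfs : ∀ (r : ℝ) (y : A), f ((r : ℂ) • y) = r * f y := fun r y => f.map_smul r y
  -- complexify f by hand
  set φ : A → ℂ := fun x => (↑(f x) - Complex.I * ↑(f (Complex.I • x)) : ℂ) with hφ_def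
  have hφ_cont : Continuous φ := by
    rw [hφ_def]
    fun_prop
  have hφ_zero : φ 0 = 0 := by simp [hφ_def]
  have hφ_sub : ∀ x y : A, φ (x - y) = φ x - φ y := by
    intro x y
    simp only [hφ_def, smul_sub, map_sub]
    push_cast
    ring
  have hφ_neg : ∀ x : A, φ (-x) = -φ x := by
    intro x
    have := hφ_sub 0 x
    simpa [hφ_zero] using this
  have hdec : ∀ (c : ℂ) (x : A), c • x = ((c.re : ℂ)) • x + ((c.im : ℂ)) • (Complex.I • x) := by
    intro c x
    rw [smul_smul, ← add_smul]
    congr 1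
    apply Complex.ext <;> simp
  have hφ_smul : ∀ (c : ℂ) (x : A), φ (c • x) = c * φ x := by
    intro c x
    have h1 : f (c • x) = c.re * f x + c.im * f (Complex.I • x) := by
      rw [hdec c x, f.map_add, hfs, hfs]
    have h2 : Complex.I • (c • x) = ((-c.im : ℝ) : ℂ) • x + ((c.re : ℝ) : ℂ) • (Complex.I • x) := by
      rw [smul_smul, show Complex.I * c = ((-c.im : ℝ) : ℂ) + ((c.re : ℝ) : ℂ) * Complex.I by
        apply Complex.ext <;> simp, add_smul, mul_smul]
    have h3 : f (Complex.I • (c • x)) = -c.im * f x + c.re * f (Complex.I • x) := by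
      rw [h2, f.map_add, hfs, hfs]
    simp only [hφ_def, h1, h3]
    apply Complex.ext <;> simp <;> ring
  -- the scalar resolvent function
  set F : ℂ → ℂ := fun z => φ (R z) with hF_def
  have hF_cont : Continuous F := hφ_cont.comp hR_cont
  -- F tends to 0 at infinity
  have hF_tendsto : Tendsto F (cocompact ℂ) (𝓝 0) := by
    have := (hφ_cont.tendsto 0).comp hR_tendsto
    rwa [hφ_zero] at this
  -- the resolvent identity
  have hres : ∀ z w : ℂ, R z - R w = (w - z) • (R z * R w) := by
    intro z w
    have key : R z - R w = R z * ((u w - u z) * R w) := by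
      calc R z - R w = R z * (u w * R w) - (R z * u z) * R w := by
            rw [huR w, hRu z, mul_one, one_mul]
        _ = R z * ((u w - u z) * R w) := by noncomm_ring
    rw [key]
    have : u w - u z = algebraMap ℂ A (w - z) := by
      simp only [hu_def, map_sub]
      abel
    rw [this, ← Algebra.smul_def, mul_smul_comm]
  -- F is differentiable
  have hF_diff : Differentiable ℂ F := by
    intro w
    have hD : HasDerivAt F (φ (-(R w * R w))) w := by
      rw [hasDerivAt_iff_tendsto_slope]
      have hlim : Tendsto (fun z : ℂ => φ (-(R z * R w))) (𝓝[≠] w) (𝓝 (φ (-(R w * R w)))) := by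
        apply (hφ_cont.tendsto _).comp
        apply Filter.Tendsto.mono_left _ nhdsWithin_le_nhds
        exact ((hR_cont.tendsto w).mul tendsto_const_nhds).neg
      refine hlim.congr' ?_
      filter_upwards [self_mem_nhdsWithin] with z hz
      have hzw : z - w ≠ 0 := sub_ne_zero.mpr hz
      show φ (-(R z * R w)) = slope F w z
      rw [slope_def_field, hF_def]
      simp only
      rw [eq_div_iff hzw, ← hφ_sub, hres z w, hφ_smul, hφ_neg]
      ring
    exact hD.differentiableAt
  -- F is bounded
  have hF_bounded : IsBounded (Set.range F) := by
    obtain ⟨K', hK', hK'sub⟩ := mem_cocompact.mp (hF_tendsto (Metric.ball_mem_nhds (0 : ℂ) one_pos))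
    have hsub : Set.range F ⊆ F '' K' ∪ Metric.ball 0 1 := by
      rintro - ⟨z, rfl⟩
      by_cases hz : z ∈ K'
      · exact Or.inl ⟨z, hz, rfl⟩
      · exact Or.inr (hK'sub hz)
    exact ((hK'.image hF_cont).isBounded.union isBounded_ball).subset hsub
  -- Liouville: F is constant, hence 0 (by the limit at infinity)
  have hF_const : ∀ z : ℂ, F z = F 0 := fun z =>
    hF_diff.apply_eq_apply_of_bounded hF_bounded z 0
  have hF0 : F 0 = 0 := by
    have h1 : Tendsto (fun _ : ℂ => F 0) (cocompact ℂ) (𝓝 0) :=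
      hF_tendsto.congr fun z => hF_const z
    exact tendsto_nhds_unique tendsto_const_nhds h1
  -- but F 0 = φ (R 0) has nonzero real part
  have hre : (φ (R 0)).re = f (R 0) := by
    simp [hφ_def]
  rw [show φ (R 0) = F 0 from rfl, hF0] at hre
  simp at hre
  exact hf hre.symm
end

section
/- Let A be a unital associative ℂ-algebra and g a finite-dimensional complex Lie subalgebra of A (with commutator bracket) such that every element of g is nilpotent as an element of A. Then there exists an integer m ≥ 1 such that a₁·a₂·⋯·a_m = 0 for all a₁, …, a_m ∈ g. -/
attribute [local instance 100] LieRing.ofAssociativeRing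

namespace EngelAux

variable {n : ℕ}

/-- Base-(n+2) value of a list of digits in `Fin n`. -/
def val : List (Fin n) → ℕ
  | [] => 0
  | x :: t => x.val * (n + 2) ^ t.length + val t

lemma val_lt (l : List (Fin n)) : val l < (n + 2) ^ l.length := by
  induction l with
  | nil => simp [val]
  | cons x t ih =>
    have hx : (x : ℕ) + 1 ≤ n := x.2
    calc val (x :: t) = (x : ℕ) * (n + 2) ^ t.length + val t := rfl
      _ < (x : ℕ) * (n + 2) ^ t.length + (n + 2) ^ t.length := by omega
      _ = ((x : ℕ) + 1) * (n + 2) ^ t.length := by ring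
      _ ≤ (n + 2) * (n + 2) ^ t.length := by
          exact Nat.mul_le_mul_right _ (by omega)
      _ = (n + 2) ^ (x :: t).length := by rw [List.length_cons, pow_succ]; ring

/-- The termination measure for straightening. -/
def mu (l : List (Fin n)) : ℕ := (n + 2) ^ l.length + val l

lemma mu_lt_of_length_lt {l l' : List (Fin n)} (h : l'.length < l.length) : mu l' < mu l := by
  have h1 := val_lt l'
  have h2 : (n + 2) ^ l'.length + (n + 2) ^ l'.length ≤ (n + 2) ^ (l'.length + 1) := by
    rw [pow_succ]
    have := Nat.one_le_two_pow (n := l'.length)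
    nlinarith [pow_pos (show 0 < n + 2 by omega) l'.length]
  have h3 : (n + 2) ^ (l'.length + 1) ≤ (n + 2) ^ l.length :=
    Nat.pow_le_pow_right (by omega) h
  have : mu l' < (n+2) ^ l'.length + (n+2)^l'.length := by
    unfold mu; omega
  unfold mu at *
  omega

lemma val_swap_lt {i j : Fin n} (hji : j < i) (v : List (Fin n)) :
    val (j :: i :: v) < val (i :: j :: v) := by
  have hji' : (j : ℕ) < (i : ℕ) := hji
  obtain ⟨d, hd⟩ : ∃ d, (i : ℕ) = (j : ℕ) + d + 1 := ⟨(i : ℕ) - (j : ℕ) - 1, by omega⟩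
  have hX : 0 < (n + 2) ^ v.length := pow_pos (by omega) _
  show (j : ℕ) * (n + 2) ^ (i :: v).length + ((i : ℕ) * (n + 2) ^ v.length + val v)
      < (i : ℕ) * (n + 2) ^ (j :: v).length + ((j : ℕ) * (n + 2) ^ v.length + val v)
  simp only [List.length_cons, pow_succ]
  rw [hd]
  have hpos : 0 < (d + 1) * (n + 2) ^ v.length * (n + 1) := by positivity
  have hkey : (j : ℕ) * ((n + 2) ^ v.length * (n + 2)) + (((j : ℕ) + d + 1) * (n + 2) ^ v.length + val v)
      + (d + 1) * (n + 2) ^ v.length * (n + 1)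
      = ((j : ℕ) + d + 1) * ((n + 2) ^ v.length * (n + 2)) + ((j : ℕ) * (n + 2) ^ v.length + val v) := by
    ring
  omega

lemma val_append_lt {l₁ l₂ : List (Fin n)} (u : List (Fin n))
    (hlen : l₁.length = l₂.length) (h : val l₁ < val l₂) :
    val (u ++ l₁) < val (u ++ l₂) := by
  induction u with
  | nil => simpa using h
  | cons x u ih =>
    have hlen2 : (u ++ l₁).length = (u ++ l₂).length := by simp [hlen]
    show (x : ℕ) * (n + 2) ^ (u ++ l₁).length + val (u ++ l₁)
        < (x : ℕ) * (n + 2) ^ (u ++ l₂).length + val (u ++ l₂)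
    rw [hlen2]
    omega

lemma mu_swap_lt {i j : Fin n} (hji : j < i) (u v : List (Fin n)) :
    mu (u ++ j :: i :: v) < mu (u ++ i :: j :: v) := by
  have hlen : (u ++ j :: i :: v).length = (u ++ i :: j :: v).length := by simp
  have := val_append_lt u (by simp) (val_swap_lt hji v)
  unfold mu
  rw [hlen]
  omega

/-- Any non-sorted list has an adjacent descent. -/
lemma exists_descent {l : List (Fin n)} (h : ¬ l.Pairwise (· ≤ ·)) :
    ∃ (u : List (Fin n)) (i j : Fin n) (v : List (Fin n)),
      l = u ++ i :: j :: v ∧ j < i := by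
  induction l with
  | nil => exact absurd List.Pairwise.nil h
  | cons x t ih =>
    by_cases ht : t.Pairwise (· ≤ ·)
    · match t, ht with
      | [], _ => exact absurd (List.pairwise_singleton _ x) h
      | y :: t', ht =>
        by_cases hxy : x ≤ y
        · exfalso
          apply h
          rw [List.pairwise_cons]
          refine ⟨?_, ht⟩
          intro b hb
          rcases List.mem_cons.mp hb with rfl | hb
          · exact hxy
          · exact hxy.trans ((List.pairwise_cons.mp ht).1 b hb)
        · exact ⟨[], x, y, t', rfl, lt_of_not_ge hxy⟩
    · obtain ⟨u, i, j, v, rfl, hji⟩ := ih ht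
      exact ⟨x :: u, i, j, v, rfl, hji⟩

section Prod

variable {A : Type*} [Ring A] {c : Fin n → A} {N : ℕ}

lemma pow_mul_sorted_prod_eq_zero (hc : ∀ i, c i ^ N = 0) (i : Fin n) :
    ∀ (l : List (Fin n)) (j : ℕ), l.Pairwise (· ≤ ·) → (∀ y ∈ l, i ≤ y) →
      N ≤ j + l.count i → c i ^ j * (l.map c).prod = 0 := by
  intro l
  induction l with
  | nil =>
    intro j _ _ hcount
    simp only [List.count_nil] at hcount
    have : c i ^ j = 0 := pow_eq_zero_of_le (by omega) (hc i)
    simp [this]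
  | cons x t ih =>
    intro j hsort hge hcount
    have hsort' : t.Pairwise (· ≤ ·) := (List.pairwise_cons.mp hsort).2
    have hge' : ∀ y ∈ t, i ≤ y := fun y hy => hge y (List.mem_cons_of_mem x hy)
    by_cases hxi : x = i
    · subst hxi
      have hcount' : N ≤ (j + 1) + t.count x := by
        simp only [List.count_cons_self] at hcount
        omega
      have := ih (j + 1) hsort' hge' hcount'
      calc c x ^ j * ((x :: t).map c).prod
          = c x ^ j * (c x * (t.map c).prod) := by simp
        _ = c x ^ (j + 1) * (t.map c).prod := by rw [pow_succ, mul_assoc]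
        _ = 0 := this
    · -- x ≠ i, but i ≤ x, so i < x, and all elements of x :: t exceed i
      have hix : i < x := lt_of_le_of_ne (hge x (List.mem_cons_self)) (Ne.symm hxi)
      have hnotmem : i ∉ x :: t := by
        intro hmem
        rcases List.mem_cons.mp hmem with rfl | hmem
        · exact hxi rfl
        · exact absurd ((List.pairwise_cons.mp hsort).1 i hmem) (not_le.mpr hix)
      have hcz : (x :: t).count i = 0 := List.count_eq_zero.mpr hnotmem
      have : c i ^ j = 0 := pow_eq_zero_of_le (by omega) (hc i)
      simp [this]

lemma sorted_prod_eq_zero (hN : 1 ≤ N) (hc : ∀ i, c i ^ N = 0) {i : Fin n} :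
    ∀ l : List (Fin n), l.Pairwise (· ≤ ·) → N ≤ l.count i → (l.map c).prod = 0 := by
  intro l
  induction l with
  | nil => intro _ h; simp only [List.count_nil] at h; omega
  | cons x t ih =>
    intro hsort hcount
    have hsort' : t.Pairwise (· ≤ ·) := (List.pairwise_cons.mp hsort).2
    by_cases hxi : x = i
    · subst hxi
      have hge' : ∀ y ∈ t, x ≤ y := (List.pairwise_cons.mp hsort).1
      have hcount' : N ≤ 1 + t.count x := by
        simp only [List.count_cons_self] at hcount; omega
      have h0 := pow_mul_sorted_prod_eq_zero hc x t 1 hsort' hge' hcount'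
      calc ((x :: t).map c).prod = c x ^ 1 * (t.map c).prod := by simp
        _ = 0 := h0
    · have hcount' : N ≤ t.count i := by
        rwa [List.count_cons_of_ne hxi] at hcount
      have := ih hsort' hcount'
      simp [this]
end Prod


lemma exists_count_ge {N : ℕ} (l : List (Fin n)) (h : n * (N - 1) < l.length) :
    ∃ i, N ≤ l.count i := by
  by_contra hcon
  push_neg at hcon
  have hsum : ∑ i : Fin n, (l : Multiset (Fin n)).count i = l.length := by
    rw [Multiset.sum_count_eq_card (fun a _ => Finset.mem_univ a)]; simp
  have hle : ∑ i : Fin n, (l : Multiset (Fin n)).count i ≤ ∑ _i : Fin n, (N - 1) := by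
    apply Finset.sum_le_sum
    intro i _
    have := hcon i
    rw [Multiset.coe_count]
    omega
  simp only [Finset.sum_const, Finset.card_univ, Fintype.card_fin, smul_eq_mul] at hle
  omega

end EngelAux

set_option maxHeartbeats 1000000
set_option synthInstance.maxHeartbeats 1000000

open EngelAux

/-- Let `A` be a unital associative `ℂ`-algebra and `g` a
finite-dimensional complex Lie subalgebra of `A` (with commutator bracket) all of whose
elements are nilpotent in `A`.  Then there is an integer `m ≥ 1` such that every product
of `m` elements of `g` vanishes. -/
theorem exists_uniform_vanishing_of_products_of_nilpotent_lie_subalgebra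
    (A : Type*) [Ring A] [Algebra ℂ A]
    (g : LieSubalgebra ℂ A) [FiniteDimensional ℂ g]
    (hnil : ∀ x : g, IsNilpotent (x : A)) :
    ∃ m : ℕ, 1 ≤ m ∧ ∀ a : Fin m → A, (∀ i, a i ∈ g) → (List.ofFn a).prod = 0 := by
  classical
  set n := Module.finrank ℂ g with hn
  let b : Module.Basis (Fin n) ℂ g := Module.finBasis ℂ g
  let c : Fin n → A := fun i => (b i : A)
  have hnil' : ∀ i : Fin n, ∃ k, c i ^ k = 0 := fun i => hnil (b i)
  choose k hk using hnil'
  set N : ℕ := Finset.univ.sup k + 1 with hNdef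
  have hN : 1 ≤ N := by omega
  have hc : ∀ i, c i ^ N = 0 := by
    intro i
    exact pow_eq_zero_of_le (Nat.le_succ_of_le (Finset.le_sup (Finset.mem_univ i))) (hk i)
  set M : ℕ := n * (N - 1) with hMdef
  set V : Submodule ℂ A :=
    Submodule.span ℂ ((fun l : List (Fin n) => (l.map c).prod) '' {l | l.length ≤ M}) with hVdef
  have hVfin : FiniteDimensional ℂ V :=
    FiniteDimensional.span_of_finite ℂ ((List.finite_length_le (Fin n) M).image _)
  have hmem : ∀ l : List (Fin n), l.length ≤ M → (l.map c).prod ∈ V := fun l hl =>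
    Submodule.subset_span ⟨l, hl, rfl⟩
  -- expressing membership in `g` via the basis
  have hspan : ∀ x : A, x ∈ g → x ∈ Submodule.span ℂ (Set.range c) := by
    intro x hx
    have hrepr := b.sum_repr ⟨x, hx⟩
    have : ((∑ i, b.repr ⟨x, hx⟩ i • b i : g) : A) = x := by rw [hrepr]
    rw [← this]
    push_cast
    exact Submodule.sum_mem _ fun i _ =>
      Submodule.smul_mem _ _ (Submodule.subset_span ⟨i, rfl⟩)
  -- the straightening lemma: every monomial in the `c i` lies in `V`
  have key : ∀ l : List (Fin n), (l.map c).prod ∈ V := by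
    suffices H : ∀ K, ∀ l : List (Fin n), mu l ≤ K → (l.map c).prod ∈ V from
      fun l => H (mu l) l le_rfl
    intro K
    induction K with
    | zero =>
      intro l hl
      exfalso
      have : 0 < (n + 2) ^ l.length := pow_pos (by omega) _
      have : 0 < mu l := by unfold EngelAux.mu; omega
      omega
    | succ K ih =>
      intro l hl
      by_cases hlen : l.length ≤ M
      · exact hmem l hlen
      · by_cases hsort : l.Pairwise (· ≤ ·)
        · obtain ⟨i, hi⟩ := exists_count_ge (N := N) l (by omega)
          rw [sorted_prod_eq_zero hN hc l hsort hi]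
          exact V.zero_mem
        · obtain ⟨u, i, j, v, rfl, hji⟩ := exists_descent hsort
          have h1 : ((u ++ j :: i :: v).map c).prod ∈ V := by
            apply ih
            have := mu_swap_lt hji u v
            omega
          have hfactor : ∀ x ∈ Submodule.span ℂ (Set.range c),
              (u.map c).prod * (x * (v.map c).prod) ∈ V := by
            intro x hx
            induction hx using Submodule.span_induction with
            | mem y hy =>
              obtain ⟨t, rfl⟩ := hy
              have heq : (u.map c).prod * (c t * (v.map c).prod)
                  = ((u ++ t :: v).map c).prod := by
                simp [List.prod_append]
              rw [heq]
              apply ih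
              have hlt : (u ++ t :: v).length < (u ++ i :: j :: v).length := by simp
              have := mu_lt_of_length_lt hlt
              omega
            | zero => simpa using V.zero_mem
            | add y z _ _ hy hz =>
              have : (u.map c).prod * ((y + z) * (v.map c).prod)
                  = (u.map c).prod * (y * (v.map c).prod)
                    + (u.map c).prod * (z * (v.map c).prod) := by noncomm_ring
              rw [this]; exact V.add_mem hy hz
            | smul r y _ hy =>
              have : (u.map c).prod * ((r • y) * (v.map c).prod)
                  = r • ((u.map c).prod * (y * (v.map c).prod)) := by
                rw [smul_mul_assoc, mul_smul_comm]
              rw [this]; exact V.smul_mem r hy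
          have hbr : (c i * c j - c j * c i) ∈ g := by
            have := (⁅b i, b j⁆ : g).2
            simpa [Ring.lie_def] using this
          have hsplit : ((u ++ i :: j :: v).map c).prod
              = ((u ++ j :: i :: v).map c).prod
                + (u.map c).prod * ((c i * c j - c j * c i) * (v.map c).prod) := by
            simp only [List.map_append, List.map_cons, List.prod_append, List.prod_cons]
            noncomm_ring
          rw [hsplit]
          exact V.add_mem h1 (hfactor _ (hspan _ hbr))
  -- `V` is invariant under left multiplication by elements of `g`
  have hinv : ∀ x : A, x ∈ g → ∀ w ∈ V, x * w ∈ V := by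
    intro x hx
    have hgen : ∀ l : List (Fin n), x * (l.map c).prod ∈ V := by
      intro l
      have hxs := hspan x hx
      clear hx
      induction hxs using Submodule.span_induction with
      | mem y hy =>
        obtain ⟨t, rfl⟩ := hy
        have : c t * (l.map c).prod = ((t :: l).map c).prod := by simp
        rw [this]; exact key _
      | zero => simpa using V.zero_mem
      | add y z _ _ hy hz => rw [add_mul]; exact V.add_mem hy hz
      | smul r y _ hy => rw [smul_mul_assoc]; exact V.smul_mem r hy
    intro w hw
    induction hw using Submodule.span_induction with
    | mem y hy =>
      obtain ⟨l, _, rfl⟩ := hy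
      exact hgen l
    | zero => simpa using V.zero_mem
    | add y z _ _ hy hz => rw [mul_add]; exact V.add_mem hy hz
    | smul r y _ hy => rw [mul_smul_comm]; exact V.smul_mem r hy
  have h1V : (1 : A) ∈ V := by simpa using hmem [] (by simp)
  -- the representation of `g` on `V` by left multiplication
  let e : g →ₗ[ℂ] Module.End ℂ V := by
    refine
      { toFun := fun x => (LinearMap.mulLeft ℂ (x : A)).restrict
          (p := V) (q := V) (fun w hw => hinv x x.2 w hw),
        map_add' := ?_, map_smul' := ?_ }
    · intro x y; ext w
      simp [LinearMap.restrict_apply, add_mul]; rfl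
    · intro r x; ext w
      have hcoe : ((r • x : g) : A) = r • (x : A) := rfl
      simp [LinearMap.restrict_apply, hcoe, smul_mul_assoc]; rfl
  let φ : g →ₗ⁅ℂ⁆ Module.End ℂ V :=
    { e with
      map_lie' := by
        intro x y
        ext w
        show ((⁅x, y⁆ : g) : A) * (w : A) = _
        have hco : ((⁅x, y⁆ : g) : A) = (x : A) * y - y * x := by
          simp [Ring.lie_def]
        simp only [hco, Module.End.lie_apply, LieRing.of_associative_ring_bracket]
        show ((x : A) * y - y * x) * (w : A)
            = ((e x * e y - e y * e x) w : A)
        simp only [LinearMap.sub_apply, Module.End.mul_apply, AddSubgroupClass.coe_sub]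
        show ((x : A) * y - y * x) * (w : A)
            = (x : A) * ((y : A) * w) - (y : A) * ((x : A) * w)
        noncomm_ring }
  have hφ : ∀ (x : g) (w : V), ((φ x w : V) : A) = (x : A) * (w : A) := fun _ _ => rfl
  let L : LieSubalgebra ℂ (Module.End ℂ V) := φ.range
  haveI : FiniteDimensional ℂ (Module.End ℂ V) := inferInstance
  haveI hLfd : FiniteDimensional ℂ L := inferInstanceAs (FiniteDimensional ℂ L.toSubmodule)
  haveI : IsNoetherian ℂ L := IsNoetherian.iff_fg.mpr hLfd
  haveI : IsNoetherian ℂ V := IsNoetherian.iff_fg.mpr hVfin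
  have hpow : ∀ (y : g) (K : ℕ) (w : V), (((φ y ^ K) w : V) : A) = ((y : A)) ^ K * (w : A) := by
    intro y K
    induction K with
    | zero => intro w; simp
    | succ K ihK =>
      intro w
      rw [pow_succ']
      show (((φ y) ((φ y ^ K) w) : V) : A) = _
      rw [hφ, ihK, pow_succ']
      rw [mul_assoc]
  have hnilEnd : ∀ x : L, IsNilpotent (LieModule.toEnd ℂ L V x) := by
    intro x
    obtain ⟨y, hy⟩ := x.2
    obtain ⟨K, hK⟩ := hnil y
    refine ⟨K, ?_⟩
    have htoEnd : LieModule.toEnd ℂ L V x = (x : Module.End ℂ V) := by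
      ext w; simp
    rw [htoEnd, ← hy]
    ext w
    have h2 := hpow y K w
    rw [hK, zero_mul] at h2
    exact h2
  have hEngel : LieModule.IsNilpotent L V :=
    LieAlgebra.isEngelian_of_isNoetherian (R := ℂ) (L := L) V hnilEnd
  obtain ⟨k, hk⟩ := (LieModule.isNilpotent_iff ℂ L V).mp hEngel
  refine ⟨k + 1, by omega, ?_⟩
  have hlcs : LieModule.lowerCentralSeries ℂ L V (k + 1) = ⊥ :=
    le_bot_iff.mp (hk ▸ LieModule.antitone_lowerCentralSeries ℂ L V (Nat.le_succ k))
  have main : ∀ l : List A, (∀ x ∈ l, x ∈ g) →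
      ∃ w : V, w ∈ LieModule.lowerCentralSeries ℂ L V l.length ∧ (w : A) = l.prod := by
    intro l
    induction l with
    | nil =>
      intro _
      exact ⟨⟨1, h1V⟩, by simp, by simp⟩
    | cons x t ih =>
      intro hmemg
      have hx : x ∈ g := hmemg x (List.mem_cons_self)
      obtain ⟨w, hw, hwA⟩ := ih fun z hz => hmemg z (List.mem_cons_of_mem x hz)
      refine ⟨⁅(⟨φ ⟨x, hx⟩, ⟨⟨x, hx⟩, rfl⟩⟩ : L), w⁆, ?_, ?_⟩
      · rw [List.length_cons, LieModule.lowerCentralSeries_succ]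
        exact LieSubmodule.lie_mem_lie (LieSubmodule.mem_top _) hw
      · have : (⁅(⟨φ ⟨x, hx⟩, ⟨⟨x, hx⟩, rfl⟩⟩ : L), w⁆ : V) = φ ⟨x, hx⟩ w := rfl
        rw [this, List.prod_cons, ← hwA]
        exact hφ ⟨x, hx⟩ w
  intro a ha
  obtain ⟨w, hw, hwA⟩ := main (List.ofFn a) (by
    intro x hx
    obtain ⟨i, rfl⟩ := List.mem_ofFn.mp hx
    exact ha i)
  rw [List.length_ofFn, hlcs, LieSubmodule.mem_bot] at hw
  rw [← hwA, hw]
  rfl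
end

section
/- Let A be a complete continuous inverse algebra over ℂ, let a, b ∈ A, let λ ∈ ℂ with λ ≠ 0, and let m ≥ 1 be an integer such that ((ad a) - λ·id)^m b = 0, where ad a : A → A is the linear map x ↦ a·x - x·a. Then for every integer N with N·|λ| > 2·r(a) (r(a) being the spectral radius of a, which is finite), one has b^N = 0. -/
open scoped ENNReal NNReal Topology
open Filter

set_option linter.unusedSectionVars false

section AuxCIA
variable {A : Type*} [Ring A] [Algebra ℂ A] [TopologicalSpace A] [IsTopologicalRing A]
  [ContinuousSMul ℂ A]

/-- The operator `x ↦ a*x - x*a - μ•x`. -/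
noncomputable def Eop (a : A) (μ : ℂ) : Module.End ℂ A :=
  LinearMap.mulLeft ℂ a - LinearMap.mulRight ℂ a - μ • (1 : Module.End ℂ A)

lemma Eop_apply (a : A) (μ : ℂ) (x : A) : Eop a μ x = a * x - x * a - μ • x := by
  simp [Eop]

lemma Eop_mul (a : A) (μ ν : ℂ) (x y : A) :
    Eop a (μ + ν) (x * y) = (Eop a μ x) * y + x * (Eop a ν y) := by
  simp only [Eop_apply, sub_mul, mul_sub, smul_mul_assoc, mul_smul_comm, add_smul, mul_assoc]
  abel

lemma Eop_pow_succ (a : A) (μ : ℂ) (n : ℕ) (x : A) :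
    (Eop a μ ^ (n + 1)) x = (Eop a μ ^ n) (Eop a μ x) := by
  rw [pow_succ, Module.End.mul_apply]

lemma Eop_vanish (a : A) (μ ν : ℂ) :
    ∀ (n p q : ℕ), p + q = n + 1 → 1 ≤ p → 1 ≤ q → ∀ x y : A,
      (Eop a μ ^ p) x = 0 → (Eop a ν ^ q) y = 0 →
      (Eop a (μ + ν) ^ n) (x * y) = 0 := by
  intro n
  induction n using Nat.strong_induction_on with
  | _ n IH =>
    intro p q hpq hp hq x y hx hy
    obtain ⟨k, rfl⟩ : ∃ k, n = k + 1 := ⟨n - 1, by omega⟩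
    rw [Eop_pow_succ, Eop_mul, map_add]
    have h1 : (Eop a (μ + ν) ^ k) ((Eop a μ) x * y) = 0 := by
      rcases eq_or_lt_of_le hp with hp1 | hp2
      · have : Eop a μ x = 0 := by
          have := hx; rw [← hp1, pow_one] at this; exact this
        rw [this, zero_mul, map_zero]
      · refine IH k (by omega) (p - 1) q (by omega) (by omega) hq _ _ ?_ hy
        have : (Eop a μ ^ (p - 1 + 1)) x = 0 := by
          rwa [Nat.sub_add_cancel hp]
        rwa [Eop_pow_succ] at this
    have h2 : (Eop a (μ + ν) ^ k) (x * (Eop a ν) y) = 0 := by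
      rcases eq_or_lt_of_le hq with hq1 | hq2
      · have : Eop a ν y = 0 := by
          have := hy; rw [← hq1, pow_one] at this; exact this
        rw [this, mul_zero, map_zero]
      · refine IH k (by omega) p (q - 1) (by omega) hp (by omega) _ _ hx ?_
        have : (Eop a ν ^ (q - 1 + 1)) y = 0 := by
          rwa [Nat.sub_add_cancel hq]
        rwa [Eop_pow_succ] at this
    rw [h1, h2, add_zero]

lemma Eop_pow_N (a b : A) (l : ℂ) (m : ℕ) (hm : 1 ≤ m)
    (hb : (Eop a l ^ m) b = 0) :
    ∀ N, 1 ≤ N → (Eop a ((N : ℂ) * l) ^ (N * (m - 1) + 1)) (b ^ N) = 0 := by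
  intro N hN
  induction N, hN using Nat.le_induction with
  | base =>
    have he : 1 * (m - 1) + 1 = m := by omega
    rw [he]
    simpa using hb
  | succ N hN IH =>
    have hcast : ((N + 1 : ℕ) : ℂ) * l = (N : ℂ) * l + l := by push_cast; ring
    have hk : (N + 1) * (m - 1) = N * (m - 1) + (m - 1) := by ring
    rw [hcast, pow_succ b N]
    exact Eop_vanish a _ _ _ (N * (m - 1) + 1) m (by omega) (by omega) hm _ _ IH hb

lemma ring_inverse_unique' {x y : A} (h1 : x * y = 1) (h2 : y * x = 1) :
    Ring.inverse x = y := by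
  have hx : IsUnit x := ⟨⟨x, y, h1, h2⟩, rfl⟩
  calc Ring.inverse x = Ring.inverse x * (x * y) := by rw [h1, mul_one]
  _ = (Ring.inverse x * x) * y := by rw [mul_assoc]
  _ = y := by rw [Ring.inverse_mul_cancel _ hx, one_mul]

lemma continuous_res (d : A) : Continuous (fun z : ℂ => algebraMap ℂ A z - d) := by
  simp only [Algebra.algebraMap_eq_smul_one]
  exact (continuous_id.smul continuous_const).sub continuous_const

lemma res_sub (d : A) {z w : ℂ} (hz : IsUnit (algebraMap ℂ A z - d))
    (hw : IsUnit (algebraMap ℂ A w - d)) :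
    Ring.inverse (algebraMap ℂ A w - d) - Ring.inverse (algebraMap ℂ A z - d)
      = (z - w) • (Ring.inverse (algebraMap ℂ A w - d) * Ring.inverse (algebraMap ℂ A z - d)) := by
  set X := algebraMap ℂ A z - d with hX
  set Y := algebraMap ℂ A w - d with hY
  have hXY : X = Y + (z - w) • (1 : A) := by
    rw [hX, hY, Algebra.algebraMap_eq_smul_one, Algebra.algebraMap_eq_smul_one, sub_smul]
    abel
  have h1 : Ring.inverse Y * X = 1 + (z - w) • Ring.inverse Y := by
    rw [hXY, mul_add, Ring.inverse_mul_cancel _ hw, mul_smul_comm, mul_one]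
  have h2 : Ring.inverse Y * X * Ring.inverse X = Ring.inverse Y := by
    rw [mul_assoc, Ring.mul_inverse_cancel _ hz, mul_one]
  rw [h1] at h2
  have h3 : Ring.inverse X + (z - w) • (Ring.inverse Y * Ring.inverse X) = Ring.inverse Y := by
    conv_rhs => rw [← h2]
    rw [add_mul, one_mul, smul_mul_assoc]
  calc Ring.inverse Y - Ring.inverse X
      = (Ring.inverse X + (z - w) • (Ring.inverse Y * Ring.inverse X)) - Ring.inverse X := by
        rw [h3]
    _ = (z - w) • (Ring.inverse Y * Ring.inverse X) := add_sub_cancel_left _ _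

lemma hasDerivAt_res (hU : IsOpen {a : A | IsUnit a})
    (hinv : ContinuousOn (Ring.inverse : A → A) {a : A | IsUnit a})
    (ψ : A →ₗ[ℂ] ℂ) (hψ : Continuous ψ) (x y d : A) {z : ℂ}
    (hz : IsUnit (algebraMap ℂ A z - d)) :
    HasDerivAt (fun w => ψ (x * Ring.inverse (algebraMap ℂ A w - d) * y))
      (-(ψ (x * (Ring.inverse (algebraMap ℂ A z - d) * Ring.inverse (algebraMap ℂ A z - d)) * y)))
      z := by
  have hcont : ContinuousAt (fun w : ℂ => Ring.inverse (algebraMap ℂ A w - d)) z := by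
    have := ContinuousAt.comp (x := z) (f := fun w : ℂ => algebraMap ℂ A w - d)
      (g := (Ring.inverse : A → A)) (hinv.continuousAt (hU.mem_nhds hz))
      (continuous_res d).continuousAt
    exact this
  have hmem : {w : ℂ | IsUnit (algebraMap ℂ A w - d)} ∈ 𝓝 z :=
    (hU.preimage (continuous_res d)).mem_nhds hz
  rw [hasDerivAt_iff_tendsto_slope]
  have hE : slope (fun w => ψ (x * Ring.inverse (algebraMap ℂ A w - d) * y)) z
      =ᶠ[𝓝[≠] z] fun w =>
        -(ψ (x * (Ring.inverse (algebraMap ℂ A w - d) * Ring.inverse (algebraMap ℂ A z - d)) * y)) := by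
    filter_upwards [self_mem_nhdsWithin,
      eventually_nhdsWithin_of_eventually_nhds (eventually_of_mem hmem (fun w hw => hw))]
      with w hw hwu
    have hw' : w ≠ z := hw
    have hsub := res_sub d hz hwu
    have hkey : ψ (x * Ring.inverse (algebraMap ℂ A w - d) * y)
        - ψ (x * Ring.inverse (algebraMap ℂ A z - d) * y)
        = (z - w) * ψ (x * (Ring.inverse (algebraMap ℂ A w - d)
            * Ring.inverse (algebraMap ℂ A z - d)) * y) := by
      rw [← map_sub]
      have h : x * Ring.inverse (algebraMap ℂ A w - d) * y
          - x * Ring.inverse (algebraMap ℂ A z - d) * y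
          = (z - w) • (x * (Ring.inverse (algebraMap ℂ A w - d)
              * Ring.inverse (algebraMap ℂ A z - d)) * y) := by
        rw [← sub_mul, ← mul_sub, hsub, mul_smul_comm, smul_mul_assoc]
      rw [h, map_smul, smul_eq_mul]
    rw [slope_def_field, div_eq_iff (sub_ne_zero.2 hw'), hkey]
    ring
  refine Tendsto.congr' hE.symm ?_
  have hct : ContinuousAt (fun w : ℂ =>
      -(ψ (x * (Ring.inverse (algebraMap ℂ A w - d) * Ring.inverse (algebraMap ℂ A z - d)) * y))) z :=
    (hψ.continuousAt.comp
      ((continuousAt_const.mul (hcont.mul continuousAt_const)).mul continuousAt_const)).neg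
  exact hct.tendsto.mono_left nhdsWithin_le_nhds

lemma inv_smul_identity (a : A) {z : ℂ} (hz : z ≠ 0)
    (hu : IsUnit (algebraMap ℂ A z - a)) :
    Ring.inverse (algebraMap ℂ A z - a) = z⁻¹ • Ring.inverse ((1 : A) - z⁻¹ • a) := by
  have hfact : algebraMap ℂ A z - a = z • ((1 : A) - z⁻¹ • a) := by
    rw [smul_sub, Algebra.algebraMap_eq_smul_one, smul_smul, mul_inv_cancel₀ hz, one_smul]
  have hu2 : IsUnit ((1 : A) - z⁻¹ • a) := by
    have h : (1 : A) - z⁻¹ • a = z⁻¹ • (algebraMap ℂ A z - a) := by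
      rw [hfact, smul_smul, inv_mul_cancel₀ hz, one_smul]
    rw [h, Algebra.smul_def]
    exact ((isUnit_iff_ne_zero.mpr (inv_ne_zero hz)).map (algebraMap ℂ A)).mul hu
  apply ring_inverse_unique'
  · rw [hfact, smul_mul_assoc, mul_smul_comm, smul_smul, mul_inv_cancel₀ hz, one_smul,
      Ring.mul_inverse_cancel _ hu2]
  · rw [hfact, mul_smul_comm, smul_mul_assoc, smul_smul, mul_inv_cancel₀ hz, one_smul,
      Ring.inverse_mul_cancel _ hu2]

lemma mem_cocompact_norm_gt (s : ℝ) : {z : ℂ | s < ‖z‖} ∈ cocompact ℂ :=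
  mem_cocompact.mpr ⟨Metric.closedBall 0 s, isCompact_closedBall 0 s, fun z hz => by
    simpa [Metric.mem_closedBall, dist_zero_right, not_le] using hz⟩

lemma psi_zero (hU : IsOpen {a : A | IsUnit a})
    (hinv : ContinuousOn (Ring.inverse : A → A) {a : A | IsUnit a})
    (a c : A) (μ : ℂ)
    (hspec : 2 * spectralRadius ℂ a < (‖μ‖₊ : ℝ≥0∞))
    (heig : a * c - c * a - μ • c = 0)
    (ψ : A →ₗ[ℂ] ℂ) (hψ : Continuous ψ) : ψ c = 0 := by
  -- basic real-number facts
  have hfin : spectralRadius ℂ a ≠ ⊤ := by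
    intro h
    rw [h] at hspec
    rw [ENNReal.mul_top (by norm_num)] at hspec
    exact not_top_lt hspec
  set r := (spectralRadius ℂ a).toReal with hrdef
  have hr0 : 0 ≤ r := ENNReal.toReal_nonneg
  have hrμ : 2 * r < ‖μ‖ := by
    have h := ENNReal.toReal_strict_mono (by simp : ((‖μ‖₊ : ℝ≥0∞)) ≠ ⊤) hspec
    rwa [ENNReal.toReal_mul, ENNReal.toReal_ofNat, ENNReal.coe_toReal, coe_nnnorm] at h
  -- units off the spectrum
  have hunit : ∀ z : ℂ, r < ‖z‖ → IsUnit (algebraMap ℂ A z - a) := by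
    intro z hz
    have h : spectralRadius ℂ a < (‖z‖₊ : ℝ≥0∞) := by
      rw [← ENNReal.ofReal_toReal hfin, ← ENNReal.ofReal_coe_nnreal, coe_nnnorm]
      exact ENNReal.ofReal_lt_ofReal_iff (lt_of_le_of_lt hr0 hz) |>.mpr hz
    have hmem : z ∈ resolventSet ℂ a :=
      Classical.not_not.mp fun hn => h.not_ge (le_iSup₂ (α := ℝ≥0∞) z hn)
    exact spectrum.mem_resolventSet_iff.mp hmem
  have hunit2 : ∀ z : ℂ, ‖z‖ < ‖μ‖ - r → IsUnit (algebraMap ℂ A z - (algebraMap ℂ A μ + a)) := by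
    intro z hz
    have h1 : IsUnit (algebraMap ℂ A (z - μ) - a) := by
      refine hunit _ ?_
      have h2 : ‖μ‖ - ‖z‖ ≤ ‖z - μ‖ := by
        have := norm_sub_norm_le μ z
        have h3 : ‖μ - z‖ = ‖z - μ‖ := norm_sub_rev μ z
        linarith
      linarith
    rwa [map_sub, sub_sub] at h1
  -- the two functions
  set F : ℂ → ℂ := fun z => ψ (c * Ring.inverse (algebraMap ℂ A z - (algebraMap ℂ A μ + a)) * 1)
    with hFdef
  set G : ℂ → ℂ := fun z => ψ (1 * Ring.inverse (algebraMap ℂ A z - a) * c) with hGdef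
  -- intertwining identity
  have hFG : ∀ z : ℂ, r < ‖z‖ → ‖z‖ < ‖μ‖ - r → F z = G z := by
    intro z h1 h2
    have hu1 := hunit z h1
    have hu2 := hunit2 z h2
    set X := algebraMap ℂ A z - a with hXdef
    set Y := algebraMap ℂ A z - (algebraMap ℂ A μ + a) with hYdef
    have hkey : X * c = c * Y := by
      have h : X * c - c * Y = -(a * c - c * a - μ • c) := by
        simp only [hXdef, hYdef, Algebra.algebraMap_eq_smul_one, sub_mul, mul_sub, mul_add,
          add_mul, smul_mul_assoc, mul_smul_comm, one_mul, mul_one]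
        abel
      rw [heig, neg_zero, sub_eq_zero] at h
      exact h
    have main : Ring.inverse X * c = c * Ring.inverse Y := by
      calc Ring.inverse X * c
          = Ring.inverse X * c * (Y * Ring.inverse Y) := by
            rw [Ring.mul_inverse_cancel _ hu2, mul_one]
        _ = Ring.inverse X * (c * Y) * Ring.inverse Y := by simp only [mul_assoc]
        _ = Ring.inverse X * (X * c) * Ring.inverse Y := by rw [hkey]
        _ = (Ring.inverse X * X) * (c * Ring.inverse Y) := by simp only [mul_assoc]
        _ = c * Ring.inverse Y := by rw [Ring.inverse_mul_cancel _ hu1, one_mul]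
    simp only [hFdef, hGdef, one_mul, mul_one]
    rw [← main]
  -- radii
  set ρ : ℝ := ‖μ‖ / 2 with hρdef
  have hrρ : r < ρ := by rw [hρdef]; linarith
  have hρμ : ρ ≤ ‖μ‖ - r := by rw [hρdef]; linarith
  set r' : ℝ := (r + ρ) / 2 with hr'def
  have hrr' : r < r' := by rw [hr'def]; linarith
  have hr'ρ : r' < ρ := by rw [hr'def]; linarith
  -- glued function
  set H : ℂ → ℂ := fun z => if ‖z‖ < ρ then F z else G z with hHdef
  have hdiff : Differentiable ℂ H := by
    intro z₀
    rcases lt_or_ge ‖z₀‖ ρ with h | h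
    · have hF : DifferentiableAt ℂ F z₀ :=
        (hasDerivAt_res hU hinv ψ hψ c 1 _ (hunit2 z₀ (h.trans_le hρμ))).differentiableAt
      refine hF.congr_of_eventuallyEq ?_
      have hmem : {w : ℂ | ‖w‖ < ρ} ∈ 𝓝 z₀ :=
        (isOpen_lt continuous_norm continuous_const).mem_nhds h
      filter_upwards [hmem] with w hw
      simp only [hHdef, if_pos hw]
    · have hG : DifferentiableAt ℂ G z₀ :=
        (hasDerivAt_res hU hinv ψ hψ 1 c _ (hunit z₀ (lt_of_lt_of_le (hrr'.trans hr'ρ) h))).differentiableAt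
      refine hG.congr_of_eventuallyEq ?_
      have hmem : {w : ℂ | r' < ‖w‖} ∈ 𝓝 z₀ :=
        (isOpen_lt continuous_const continuous_norm).mem_nhds (lt_of_lt_of_le hr'ρ h)
      filter_upwards [hmem] with w hw
      by_cases hwρ : ‖w‖ < ρ
      · simp only [hHdef, if_pos hwρ]
        exact hFG w (hrr'.trans hw) (hwρ.trans_le hρμ)
      · simp only [hHdef, if_neg hwρ]
  -- behavior at infinity
  have hres0 : Tendsto (fun z : ℂ => Ring.inverse (algebraMap ℂ A z - a)) (cocompact ℂ) (𝓝 0) := by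
    have h1 : Tendsto (fun z : ℂ => z⁻¹) (cocompact ℂ) (𝓝 0) := by
      rw [← Metric.cobounded_eq_cocompact]
      exact tendsto_inv₀_cobounded
    have hone : ContinuousAt (Ring.inverse : A → A) 1 :=
      hinv.continuousAt (hU.mem_nhds (by exact isUnit_one))
    have h2 : Tendsto (fun z : ℂ => Ring.inverse ((1 : A) - z⁻¹ • a)) (cocompact ℂ) (𝓝 1) := by
      have h3 : Tendsto (fun z : ℂ => (1 : A) - z⁻¹ • a) (cocompact ℂ) (𝓝 1) := by
        have h4 : Tendsto (fun z : ℂ => z⁻¹ • a) (cocompact ℂ) (𝓝 ((0 : ℂ) • a)) :=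
          h1.smul_const a
        rw [zero_smul] at h4
        simpa using tendsto_const_nhds.sub h4
      have := hone.tendsto.comp h3
      rwa [Ring.inverse_one] at this
    have h5 : Tendsto (fun z : ℂ => z⁻¹ • Ring.inverse ((1 : A) - z⁻¹ • a)) (cocompact ℂ)
        (𝓝 ((0 : ℂ) • (1 : A))) := h1.smul h2
    rw [zero_smul] at h5
    refine Tendsto.congr' ?_ h5
    filter_upwards [mem_cocompact_norm_gt (max r 0)] with z hz
    have hz0 : z ≠ 0 := by
      intro h
      rw [h, norm_zero] at hz
      exact absurd hz (not_lt.mpr (le_max_right r 0))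
    exact (inv_smul_identity a hz0 (hunit z (lt_of_le_of_lt (le_max_left r 0) hz))).symm
  have htendG : Tendsto G (cocompact ℂ) (𝓝 0) := by
    rw [hGdef]
    have hcm : Continuous (fun x : A => ψ (1 * x * c)) :=
      hψ.comp ((continuous_const.mul continuous_id).mul continuous_const)
    have hthis := (hcm.continuousAt (x := (0 : A))).tendsto.comp hres0
    have heq : (0 : ℂ) = ψ (1 * (0 : A) * c) := by simp
    rw [heq]
    exact hthis
  have htendH : Tendsto H (cocompact ℂ) (𝓝 0) := by
    refine Tendsto.congr' ?_ htendG
    filter_upwards [mem_cocompact_norm_gt ρ] with z hz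
    simp only [hHdef, if_neg (not_lt.mpr hz.le)]
  -- Liouville
  have hH0 : ∀ z, H z = 0 := fun z => hdiff.apply_eq_of_tendsto_cocompact z htendH
  -- extract ψ c = 0
  have hone : ContinuousAt (Ring.inverse : A → A) 1 :=
    hinv.continuousAt (hU.mem_nhds (by exact isUnit_one))
  have hninv : Tendsto (fun n : ℕ => ((n : ℂ))⁻¹) atTop (𝓝 0) :=
    tendsto_inv_atTop_nhds_zero_nat (𝕜 := ℂ)
  have hseq1 : Tendsto (fun n : ℕ => ψ (Ring.inverse ((1 : A) - ((n : ℂ))⁻¹ • a) * c)) atTop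
      (𝓝 (ψ c)) := by
    have h3 : Tendsto (fun n : ℕ => (1 : A) - ((n : ℂ))⁻¹ • a) atTop (𝓝 1) := by
      have h4 : Tendsto (fun n : ℕ => ((n : ℂ))⁻¹ • a) atTop (𝓝 ((0 : ℂ) • a)) :=
        hninv.smul_const a
      rw [zero_smul] at h4
      simpa using tendsto_const_nhds.sub h4
    have h5 : Tendsto (fun n : ℕ => Ring.inverse ((1 : A) - ((n : ℂ))⁻¹ • a)) atTop (𝓝 1) := by
      have := hone.tendsto.comp h3
      rwa [Ring.inverse_one] at this
    have hcm : Continuous (fun x : A => ψ (x * c)) :=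
      hψ.comp (continuous_id.mul continuous_const)
    have := (hcm.continuousAt (x := (1 : A))).tendsto.comp h5
    rwa [one_mul] at this
  have hseq2 : ∀ᶠ n : ℕ in atTop, ψ (Ring.inverse ((1 : A) - ((n : ℂ))⁻¹ • a) * c) = 0 := by
    have hev : ∀ᶠ n : ℕ in atTop, max r ρ < (n : ℝ) :=
      tendsto_natCast_atTop_atTop.eventually_gt_atTop (max r ρ)
    filter_upwards [hev] with n hn
    set z : ℂ := (n : ℂ) with hzdef
    have hnorm : ‖z‖ = (n : ℝ) := by simp [hzdef]
    have hzr : r < ‖z‖ := by rw [hnorm]; exact lt_of_le_of_lt (le_max_left r ρ) hn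
    have hzρ : ρ < ‖z‖ := by rw [hnorm]; exact lt_of_le_of_lt (le_max_right r ρ) hn
    have hz0 : z ≠ 0 := by
      intro h
      rw [h, norm_zero] at hzr
      linarith
    have hu := hunit z hzr
    have hG0 : G z = 0 := by
      have hHz := hH0 z
      simp only [hHdef, if_neg (not_lt.mpr hzρ.le)] at hHz
      exact hHz
    have hGz : ψ (Ring.inverse (algebraMap ℂ A z - a) * c) = 0 := by
      simpa [hGdef] using hG0
    have hid : Ring.inverse ((1 : A) - z⁻¹ • a) = z • Ring.inverse (algebraMap ℂ A z - a) := by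
      rw [inv_smul_identity a hz0 hu, smul_smul, mul_inv_cancel₀ hz0, one_smul]
    rw [hid, smul_mul_assoc, map_smul, smul_eq_mul, hGz, mul_zero]
  have hEq : (fun n : ℕ => ψ (Ring.inverse ((1 : A) - ((n : ℂ))⁻¹ • a) * c))
      =ᶠ[atTop] (fun _ => (0 : ℂ)) := hseq2
  exact tendsto_nhds_unique hseq1 (Tendsto.congr' hEq.symm tendsto_const_nhds)

end AuxCIA

section Transfer

lemma half_comb_aux {E : Type*} [AddCommGroup E] [Module ℝ E] (u v : E) :
    ((2⁻¹ : ℝ) • u + (2⁻¹ : ℝ) • v) + ((2⁻¹ : ℝ) • u + (2⁻¹ : ℝ) • v) = u + v := by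
  have hu : (2⁻¹ : ℝ) • u + (2⁻¹ : ℝ) • u = u := by
    rw [← add_smul]
    norm_num
  have hv : (2⁻¹ : ℝ) • v + (2⁻¹ : ℝ) • v = v := by
    rw [← add_smul]
    norm_num
  calc ((2⁻¹ : ℝ) • u + (2⁻¹ : ℝ) • v) + ((2⁻¹ : ℝ) • u + (2⁻¹ : ℝ) • v)
      = ((2⁻¹ : ℝ) • u + (2⁻¹ : ℝ) • u) + ((2⁻¹ : ℝ) • v + (2⁻¹ : ℝ) • v) := by abel
    _ = u + v := by rw [hu, hv]

lemma half_unique_aux {E : Type*} [AddCommGroup E] [Module ℂ E] {w z : E} (h : w + w = z) :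
    w = (2⁻¹ : ℂ) • z := by
  have h2 : (2 : ℂ) • w = z := by rw [two_smul]; exact h
  calc w = (2⁻¹ : ℂ) • ((2 : ℂ) • w) := by
        rw [smul_smul]
        norm_num
    _ = (2⁻¹ : ℂ) • z := by rw [h2]

lemma open_midpoint_convex {E : Type*} [AddCommGroup E] [Module ℂ E] [TopologicalSpace E]
    [IsTopologicalAddGroup E] [ContinuousSMul ℂ E] {s : Set E} (hs : IsOpen s)
    (hmid : ∀ x ∈ s, ∀ y ∈ s, (2⁻¹ : ℂ) • (x + y) ∈ s) : Convex ℝ s := by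
  intro x hx y hy a b ha hb hab
  set p : ℝ → E := fun t => ((t : ℂ)) • x + (((1 - t : ℝ) : ℂ)) • y with hpdef
  have hpc : Continuous p := by
    rw [hpdef]
    exact ((Complex.continuous_ofReal).smul continuous_const).add
      ((Complex.continuous_ofReal.comp (continuous_const.sub continuous_id)).smul continuous_const)
  have hp0 : p 0 = y := by simp [hpdef]
  have hp1 : p 1 = x := by simp [hpdef]
  have hmidT : ∀ u v : ℝ, p u ∈ s → p v ∈ s → p ((u + v) / 2) ∈ s := by
    intro u v hu hv
    have h := hmid _ hu _ hv
    have he : (2⁻¹ : ℂ) • (p u + p v) = p ((u + v) / 2) := by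
      simp only [hpdef]
      push_cast
      module
    rwa [he] at h
  have hdy : ∀ n k : ℕ, k ≤ 2 ^ n → p ((k : ℝ) / 2 ^ n) ∈ s := by
    intro n
    induction n with
    | zero =>
      intro k hk
      interval_cases k
      · simpa [hp0] using hy
      · simpa [hp1] using hx
    | succ n IH =>
      intro k hk
      have hpow : 2 ^ (n + 1) = 2 * 2 ^ n := by ring
      rcases Nat.even_or_odd k with ⟨j, hj⟩ | ⟨j, hj⟩
      · subst hj
        have hj2 : j ≤ 2 ^ n := by omega
        have harith : ((j + j : ℕ) : ℝ) / 2 ^ (n + 1) = (j : ℝ) / 2 ^ n := by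
          have h2 : (2:ℝ) ^ (n+1) = 2 * 2 ^ n := by ring
          push_cast
          rw [h2]
          field_simp
          ring
        rw [harith]
        exact IH j hj2
      · subst hj
        have hj1 : j ≤ 2 ^ n - 1 := by omega
        have hj2 : j ≤ 2 ^ n := by omega
        have hj3 : j + 1 ≤ 2 ^ n := by omega
        have harith : ((2 * j + 1 : ℕ) : ℝ) / 2 ^ (n + 1)
            = (((j : ℝ) / 2 ^ n) + (((j + 1 : ℕ) : ℝ) / 2 ^ n)) / 2 := by
          have h2 : (2:ℝ) ^ (n+1) = 2 * 2 ^ n := by ring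
          push_cast
          rw [h2]
          field_simp
          ring
        rw [harith]
        exact hmidT _ _ (IH j hj2) (IH (j + 1) hj3)
  have hIcc : ∀ t ∈ Set.Icc (0 : ℝ) 1, p t ∈ s := by
    by_contra hcon
    push_neg at hcon
    obtain ⟨t₁, ht₁, hps⟩ := hcon
    set K : Set ℝ := Set.Icc (0 : ℝ) 1 ∩ {t | p t ∉ s} with hKdef
    have hKne : K.Nonempty := ⟨t₁, ht₁, hps⟩
    have hKclosed : IsClosed K := by
      refine IsClosed.inter isClosed_Icc ?_
      have he : {t : ℝ | p t ∉ s} = p ⁻¹' sᶜ := rfl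
      rw [he]
      exact (isClosed_compl_iff.mpr hs).preimage hpc
    have hKbdd : BddBelow K := ⟨0, fun t ht => ht.1.1⟩
    set t₀ := sInf K with ht₀def
    have ht₀K : t₀ ∈ K := hKclosed.csInf_mem hKne hKbdd
    have h0T : p 0 ∈ s := by rw [hp0]; exact hy
    have h1T : p 1 ∈ s := by rw [hp1]; exact hx
    have ht₀0 : 0 < t₀ := by
      rcases eq_or_lt_of_le ht₀K.1.1 with h | h
      · exact absurd h0T (h ▸ ht₀K.2)
      · exact h
    have ht₀1 : t₀ < 1 := by
      rcases eq_or_lt_of_le ht₀K.1.2 with h | h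
      · exact absurd h1T (h ▸ ht₀K.2)
      · exact h
    set ε := min t₀ (1 - t₀) with hεdef
    have hε : 0 < ε := lt_min ht₀0 (by linarith)
    have hεt : ε ≤ t₀ := min_le_left _ _
    have hε1 : ε ≤ 1 - t₀ := min_le_right _ _
    have hstep : ∀ h : ℝ, 0 < h → h < ε → (t₀ + h) ∈ K := by
      intro h hh1 hh2
      have hh3 : h < t₀ := lt_of_lt_of_le hh2 hεt
      have hh4 : h < 1 - t₀ := lt_of_lt_of_le hh2 hε1
      refine ⟨⟨by linarith, by linarith⟩, ?_⟩
      intro hmem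
      have hum : (t₀ - h) ∉ K := by
        intro hK'
        have hle := csInf_le hKbdd hK'
        rw [← ht₀def] at hle
        linarith
      have hul : p (t₀ - h) ∈ s := by
        by_contra hns
        exact hum ⟨⟨by linarith, by linarith⟩, hns⟩
      have hm := hmidT _ _ hul hmem
      have harith : ((t₀ - h) + (t₀ + h)) / 2 = t₀ := by ring
      rw [harith] at hm
      exact ht₀K.2 hm
    obtain ⟨n, hn⟩ := pow_unbounded_of_one_lt (1 / ε) (one_lt_two (α := ℝ))
    set k := ⌊t₀ * 2 ^ n⌋₊ + 1 with hkdef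
    have h2n : (0 : ℝ) < 2 ^ n := by positivity
    have hkt : t₀ < (k : ℝ) / 2 ^ n := by
      rw [lt_div_iff₀ h2n, hkdef]
      push_cast
      exact Nat.lt_floor_add_one (t₀ * 2 ^ n)
    have hke : (k : ℝ) / 2 ^ n < t₀ + ε := by
      rw [div_lt_iff₀ h2n, hkdef]
      have h1 : (⌊t₀ * 2 ^ n⌋₊ : ℝ) ≤ t₀ * 2 ^ n := Nat.floor_le (by positivity)
      have h2 : (1 : ℝ) < ε * 2 ^ n := by
        rw [div_lt_iff₀ hε] at hn
        linarith
      push_cast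
      nlinarith
    have hk2n : k ≤ 2 ^ n := by
      have hεle : t₀ + ε ≤ 1 := by linarith
      have hlt : (k : ℝ) < 2 ^ n := by
        have h3 := hke.trans_le hεle
        rw [div_lt_one h2n] at h3
        exact h3
      have : k < 2 ^ n := by exact_mod_cast hlt
      omega
    have hdk := hdy n k hk2n
    have hkK := hstep ((k : ℝ) / 2 ^ n - t₀) (by linarith) (by linarith)
    rw [show t₀ + ((k : ℝ) / 2 ^ n - t₀) = (k : ℝ) / 2 ^ n by ring] at hkK
    exact hkK.2 hdk
  have hmem := hIcc a ⟨ha, by linarith⟩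
  simp only [hpdef] at hmem
  rw [Complex.coe_smul, Complex.coe_smul] at hmem
  have hba : b = 1 - a := by linarith
  rw [hba]
  exact hmem

lemma lcs_transfer {E : Type*} [AddCommGroup E] [Module ℂ E] [TopologicalSpace E]
    [IsTopologicalAddGroup E] [ContinuousSMul ℂ E]
    (modR : Module ℝ E)
    (hlc : @LocallyConvexSpace ℝ E _ _ _ modR _) :
    @LocallyConvexSpace ℝ E _ _ _ (Module.complexToReal E) _ := by
  have hkey : ∀ U ∈ (𝓝 (0 : E)), ∃ S ∈ 𝓝 (0 : E),
      (∀ u ∈ S, ∀ v ∈ S, (2⁻¹ : ℂ) • (u + v) ∈ S) ∧ S ⊆ U := by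
    intro U hU
    obtain ⟨S, hS𝓝, hSconv, hSU⟩ :=
      (@locallyConvexSpace_iff_exists_convex_subset_zero ℝ E _ _ _ modR _).mp hlc U hU
    refine ⟨S, hS𝓝, ?_, hSU⟩
    intro u hu v hv
    have hw := hSconv hu hv (by norm_num : (0:ℝ) ≤ 2⁻¹) (by norm_num : (0:ℝ) ≤ 2⁻¹)
      (by norm_num : (2⁻¹ : ℝ) + 2⁻¹ = 1)
    have heq := half_unique_aux (@half_comb_aux E _ modR u v)
    rwa [heq] at hw
  clear hlc
  clear modR
  rw [locallyConvexSpace_iff_exists_convex_subset_zero]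
  intro U hU
  obtain ⟨S, hS𝓝, hmap, hSU⟩ := hkey U hU
  refine ⟨interior S, interior_mem_nhds.mpr hS𝓝, ?_, interior_subset.trans hSU⟩
  apply open_midpoint_convex isOpen_interior
  intro x hx y hy
  have hopen : IsOpen ((fun z => (2⁻¹ : ℂ) • (x + z)) '' interior S) := by
    have h1 : (fun z : E => (2⁻¹ : ℂ) • (x + z))
        = (fun w : E => (2⁻¹ : ℂ) • w) ∘ (fun z => x + z) := rfl
    rw [h1, Set.image_comp]
    exact (isOpenMap_smul₀ (by norm_num : (2⁻¹ : ℂ) ≠ 0)) _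
      ((isOpenMap_add_left x) _ isOpen_interior)
  have hsub : ((fun z => (2⁻¹ : ℂ) • (x + z)) '' interior S) ⊆ S := by
    rintro _ ⟨z, hz, rfl⟩
    exact hmap x (interior_subset hx) z (interior_subset hz)
  exact interior_maximal hsub hopen ⟨y, hy, rfl⟩

lemma exists_sep_functional {E : Type*} [AddCommGroup E] [Module ℂ E] [TopologicalSpace E]
    [IsTopologicalAddGroup E] [ContinuousSMul ℂ E] [T2Space E]
    [LocallyConvexSpace ℝ E]
    (c : E) (hc : c ≠ 0) : ∃ ψ : E →ₗ[ℂ] ℂ, Continuous ψ ∧ ψ c ≠ 0 := by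
  haveI : ContinuousSMul ℝ E := by
    refine ⟨?_⟩
    have h : (fun q : ℝ × E => q.1 • q.2) = fun q : ℝ × E => ((q.1 : ℂ)) • q.2 := by
      funext q
      exact (Complex.coe_smul q.1 q.2).symm
    rw [h]
    exact (Complex.continuous_ofReal.comp continuous_fst).smul continuous_snd
  haveI : SeparatingDual ℝ E := inferInstance
  obtain ⟨fr, hfr⟩ := SeparatingDual.exists_ne_zero (R := ℝ) hc
  refine ⟨LinearMap.extendTo𝕜' (fr : E →ₗ[ℝ] ℝ), ?_, ?_⟩
  · have heq : ⇑(LinearMap.extendTo𝕜' (𝕜 := ℂ) (fr : E →ₗ[ℝ] ℝ)) = fun x =>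
        ((fr x : ℝ) : ℂ) - (RCLike.I : ℂ) * ((fr ((RCLike.I : ℂ) • x) : ℝ) : ℂ) := by
      funext x
      exact LinearMap.extendTo𝕜'_apply _ x
    rw [heq]
    exact (Complex.continuous_ofReal.comp fr.continuous).sub
      (continuous_const.mul (Complex.continuous_ofReal.comp
        (fr.continuous.comp (continuous_const_smul _))))
  · intro h0
    have hre := LinearMap.extendTo𝕜'_apply_re (𝕜 := ℂ) (fr : E →ₗ[ℝ] ℝ) c
    unfold LinearMap.extendTo𝕜' at h0
    rw [h0] at hre
    simp only [map_zero] at hre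
    exact hfr hre.symm

end Transfer

lemma eigen_zero_cia {A : Type*} [Ring A] [Algebra ℂ A]
    [UniformSpace A] [IsUniformAddGroup A] [CompleteSpace A]
    [IsTopologicalRing A] [ContinuousSMul ℂ A] [T2Space A]
    [modR : Module ℝ A] [IsScalarTower ℝ ℂ A] [hlcs : LocallyConvexSpace ℝ A]
    (hU : IsOpen {a : A | IsUnit a})
    (hinv : ContinuousOn (Ring.inverse : A → A) {a : A | IsUnit a})
    (a c : A) (μ : ℂ)
    (hspec : 2 * spectralRadius ℂ a < (‖μ‖₊ : ℝ≥0∞))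
    (heig : a * c - c * a - μ • c = 0) : c = 0 := by
  by_contra hc
  haveI := lcs_transfer modR hlcs
  obtain ⟨ψ, hψc, hψne⟩ := exists_sep_functional c hc
  exact hψne (psi_zero hU hinv a c μ hspec heig ψ hψc)

/-- Let `A` be a complete continuous inverse algebra over `ℂ`,
`a, b ∈ A`, `λ ≠ 0` and `m ≥ 1` with `((ad a) - λ·id)^m b = 0`, where
`(ad a)(x) = a·x - x·a`.  Then `b^N = 0` for every integer `N` with
`N·|λ| > 2·r(a)`, `r(a)` denoting the spectral radius of `a`. -/
theorem pow_eq_zero_of_generalized_eigenvector_of_ad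
    (A : Type*) [Ring A] [Algebra ℂ A]
    [UniformSpace A] [IsUniformAddGroup A] [CompleteSpace A]
    [IsTopologicalRing A] [ContinuousSMul ℂ A] [T2Space A]
    [Module ℝ A] [IsScalarTower ℝ ℂ A] [LocallyConvexSpace ℝ A]
    (hU : IsOpen {a : A | IsUnit a})
    (hinv : ContinuousOn (Ring.inverse : A → A) {a : A | IsUnit a})
    (a b : A) (l : ℂ) (hl : l ≠ 0) (m : ℕ) (hm : 1 ≤ m)
    (hb : ((LinearMap.mulLeft ℂ a - LinearMap.mulRight ℂ a
        - l • (1 : Module.End ℂ A)) ^ m) b = 0)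
    (N : ℕ) (hN : 2 * spectralRadius ℂ a < (N : ℝ≥0∞) * (‖l‖₊ : ℝ≥0∞)) :
    b ^ N = 0 := by
  have hb' : (Eop a l ^ m) b = 0 := hb
  have hN1 : 1 ≤ N := by
    rcases Nat.eq_zero_or_pos N with h0 | h1
    · subst h0
      simp only [Nat.cast_zero, zero_mul] at hN
      exact absurd hN (by simp)
    · exact h1
  set μ : ℂ := (N : ℂ) * l with hμdef
  have hμ : 2 * spectralRadius ℂ a < (‖μ‖₊ : ℝ≥0∞) := by
    have h1 : ‖μ‖₊ = (N : ℝ≥0) * ‖l‖₊ := by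
      rw [hμdef, nnnorm_mul, Complex.nnnorm_natCast]
    rw [h1, ENNReal.coe_mul]
    simpa using hN
  have key := Eop_pow_N a b l m hm hb' N hN1
  have hinj : ∀ (k : ℕ) (x : A), (Eop a μ ^ k) x = 0 → x = 0 := by
    intro k
    induction k with
    | zero => intro x hx; simpa using hx
    | succ k IH =>
      intro x hx
      rw [Eop_pow_succ] at hx
      have h2 : Eop a μ x = 0 := IH _ hx
      rw [Eop_apply] at h2
      exact eigen_zero_cia hU hinv a x μ hμ h2
  exact hinj _ _ key
end
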